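/- Let $0 < \alpha < 1$ and $n \ge 2$. The function $u(x) = \sum_{j=1}^\infty 2^{-j\alpha}\,\mathrm{Re}(x_1+ix_2)^{2^j}$ is harmonic in $\mathbb{B}_n$ and Hölder continuous with exponent $\alpha$ on $\overline{\mathbb{B}_n}$, but is not Hölder continuous with exponent $\beta$ for any $\beta > \alpha$. -/

import Mathlib

/-!
On the closed ball, `u = Re F (L x)` with `L x = x₁ + i x₂` and `F z = ∑ⱼ 2^{-jα} z^{2^j}`, a power
series converging uniformly on the closed disk and holomorphic in the open one. Harmonicity: the
second derivative of `Re F ∘ L` along `eₖ` is `Re ((L eₖ)² F'')`, and `∑ₖ (L eₖ)² = 1 + i² = 0`.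

Hölder continuity: if `|z - w| = d ≈ 2^{-N}`, the terms with `j < N` are Lipschitz with constants
`2^{j(1-α)}`, summing to `≈ 2^{N(1-α)}`, and the others are bounded by `2 · 2^{-jα}`, summing to
`≈ 2^{-Nα}`; both contributions are `O(d^α)` exactly because `0 < α < 1`.

Sharpness is seen on the real axis, where every term is nonnegative: at `r = 1 - 2^{-j}` the `j`-th
term alone drops by half of its coefficient `2^{-jα} = (1 - r)^α`.
-/
open Metric

noncomputable section

/-- The Laplacian `Δ f = ∑ i, ∂²f/∂xᵢ²` on Euclidean space. -/
def lap {n : ℕ} (f : EuclideanSpace ℝ (Fin n) → ℝ) (x : EuclideanSpace ℝ (Fin n)) : ℝ :=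
  ∑ i : Fin n,
    fderiv ℝ (fun y => fderiv ℝ f y (EuclideanSpace.single i 1)) x (EuclideanSpace.single i 1)

/-- `f` is harmonic on `s`: it is `C²` there and its Laplacian vanishes. -/
def IsHarmonicOn {n : ℕ} (f : EuclideanSpace ℝ (Fin n) → ℝ)
    (s : Set (EuclideanSpace ℝ (Fin n))) : Prop :=
  ContDiffOn ℝ 2 f s ∧ ∀ x ∈ s, lap f x = 0

open Complex Finset

theorem norm_pow_sub_pow_le {R : Type*} [SeminormedCommRing R] [NormOneClass R] {z w : R}
    (hz : ‖z‖ ≤ 1) (hw : ‖w‖ ≤ 1) (m : ℕ) : ‖z ^ m - w ^ m‖ ≤ m * ‖z - w‖ := by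
  have hsum : ‖∑ i ∈ range m, z ^ i * w ^ (m - 1 - i)‖ ≤ m := by
    refine (norm_sum_le _ _).trans ?_
    simpa using sum_le_sum (s := range m) fun i _ =>
      (norm_mul_le (z ^ i) (w ^ (m - 1 - i))).trans <|
        mul_le_one₀ ((norm_pow_le z i).trans (pow_le_one₀ (norm_nonneg z) hz)) (norm_nonneg _)
          ((norm_pow_le w _).trans (pow_le_one₀ (norm_nonneg w) hw))
  rw [← geom_sum₂_mul]
  exact (norm_mul_le _ _).trans (by gcongr)

theorem one_sub_one_div_pow_le_half {k : ℕ} (hk : 1 ≤ k) : (1 - 1 / k : ℝ) ^ k ≤ 1 / 2 := by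
  calc (1 - 1 / k : ℝ) ^ k ≤ Real.exp (-1) := Real.one_sub_div_pow_le_exp_neg (by exact_mod_cast hk)
    _ ≤ 1 / 2 := by
      rw [Real.exp_neg, one_div]
      exact inv_anti₀ two_pos Real.exp_one_gt_two.le

theorem sum_range_pow_succ_le {p : ℝ} (hp : 1 < p) (N : ℕ) :
    ∑ j ∈ range N, p ^ (j + 1) ≤ p / (p - 1) * p ^ N := by
  have hp1 : 0 < p - 1 := sub_pos.mpr hp
  calc ∑ j ∈ range N, p ^ (j + 1) = p * ((p ^ N - 1) / (p - 1)) := by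
        simp_rw [pow_succ', ← mul_sum, geom_sum_eq hp.ne']
    _ ≤ p / (p - 1) * p ^ N := by
        rw [mul_div_assoc', div_mul_eq_mul_div]
        gcongr
        linarith

open Topology

section

variable {E : Type*} [NormedAddCommGroup E] [NormedSpace ℝ E]

theorem fderiv_re_comp_clm_apply (L : E →L[ℝ] ℂ) {f : ℂ → ℂ} {x : E}
    (hf : DifferentiableAt ℂ f (L x)) (v : E) :
    fderiv ℝ (fun y => (f (L y)).re) x v = (L v * deriv f (L x)).re := by
  have hd := reCLM.hasFDerivAt.comp x
    ((hf.hasDerivAt.hasFDerivAt.restrictScalars ℝ).comp x L.hasFDerivAt)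
  rw [show (fun y => (f (L y)).re) = reCLM ∘ f ∘ L from rfl, hd.fderiv]
  simp [smul_eq_mul]

theorem fderiv_fderiv_re_comp_clm_apply (L : E →L[ℝ] ℂ) {f : ℂ → ℂ} {U : Set ℂ}
    (hU : IsOpen U) (hf : DifferentiableOn ℂ f U) {x : E} (hx : L x ∈ U) (v : E) :
    fderiv ℝ (fun y => fderiv ℝ (fun y => (f (L y)).re) y v) x v =
      (L v ^ 2 * deriv (deriv f) (L x)).re := by
  have hf' : DifferentiableAt ℂ (deriv f) (L x) :=
    (hf.deriv hU).differentiableAt (hU.mem_nhds hx)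
  have heq : (fun y => fderiv ℝ (fun y => (f (L y)).re) y v) =ᶠ[𝓝 x]
      fun y => ((fun z => L v * deriv f z) (L y)).re := by
    filter_upwards [L.continuous.continuousAt.preimage_mem_nhds (hU.mem_nhds hx)] with y hy
    exact fderiv_re_comp_clm_apply L (hf.differentiableAt (hU.mem_nhds hy)) v
  rw [heq.fderiv_eq, fderiv_re_comp_clm_apply L (hf'.const_mul _) v, deriv_const_mul _ hf']
  ring_nf

end

section

variable {n : ℕ}

theorem lap_congr_nhds {f g : EuclideanSpace ℝ (Fin n) → ℝ} {x : EuclideanSpace ℝ (Fin n)}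
    (h : f =ᶠ[𝓝 x] g) : lap f x = lap g x := by
  refine sum_congr rfl fun i _ => ?_
  have hfg : (fun y => fderiv ℝ f y (EuclideanSpace.single i 1)) =ᶠ[𝓝 x]
      fun y => fderiv ℝ g y (EuclideanSpace.single i 1) :=
    h.eventuallyEq_nhds.mono fun y hy => DFunLike.congr_fun hy.fderiv_eq _
  rw [hfg.fderiv_eq]

theorem IsHarmonicOn.congr {f g : EuclideanSpace ℝ (Fin n) → ℝ}
    {s : Set (EuclideanSpace ℝ (Fin n))} (hg : IsHarmonicOn g s) (hs : IsOpen s)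
    (hfg : Set.EqOn f g s) : IsHarmonicOn f s :=
  ⟨hg.1.congr hfg, fun x hx =>
    (lap_congr_nhds (Filter.eventuallyEq_of_mem (hs.mem_nhds hx) hfg)).trans (hg.2 x hx)⟩

theorem lap_re_comp_clm (L : EuclideanSpace ℝ (Fin n) →L[ℝ] ℂ) {f : ℂ → ℂ} {U : Set ℂ}
    (hU : IsOpen U) (hf : DifferentiableOn ℂ f U) {x : EuclideanSpace ℝ (Fin n)}
    (hx : L x ∈ U) :
    lap (fun y => (f (L y)).re) x =
      ((∑ i, L (EuclideanSpace.single i 1) ^ 2) * deriv (deriv f) (L x)).re := by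
  simp only [lap, fderiv_fderiv_re_comp_clm_apply L hU hf hx, sum_mul, re_sum]

theorem isHarmonicOn_re_comp_clm (L : EuclideanSpace ℝ (Fin n) →L[ℝ] ℂ)
    (hL : ∑ i, L (EuclideanSpace.single i 1) ^ 2 = 0) {f : ℂ → ℂ} {U : Set ℂ}
    (hU : IsOpen U) (hf : DifferentiableOn ℂ f U) {s : Set (EuclideanSpace ℝ (Fin n))}
    (hLs : Set.MapsTo L s U) : IsHarmonicOn (fun y => (f (L y)).re) s := by
  refine ⟨?_, fun x hx => by rw [lap_re_comp_clm L hU hf (hLs hx), hL, zero_mul, zero_re]⟩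
  have hf2 : ContDiffOn ℝ 2 f U :=
    ((hf.analyticOnNhd hU).contDiffOn hU.uniqueDiffOn).restrict_scalars ℝ
  exact reCLM.contDiff.comp_contDiffOn (hf2.comp L.contDiff.contDiffOn hLs)

def coordPair (i j : Fin n) : EuclideanSpace ℝ (Fin n) →L[ℝ] ℂ :=
  ofRealCLM.comp (EuclideanSpace.proj i) + (EuclideanSpace.proj j).smulRight I

variable {i j : Fin n}

theorem coordPair_apply (x : EuclideanSpace ℝ (Fin n)) : coordPair i j x = x i + x j * I := by
  simp [coordPair, real_smul]

theorem coordPair_single_left (hij : i ≠ j) (r : ℝ) :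
    coordPair i j (EuclideanSpace.single i r) = r := by
  simp [coordPair_apply, hij.symm]

theorem norm_coordPair_le (hij : i ≠ j) (x : EuclideanSpace ℝ (Fin n)) :
    ‖coordPair i j x‖ ≤ ‖x‖ := by
  rw [← sq_le_sq₀ (norm_nonneg _) (norm_nonneg _), coordPair_apply, Complex.sq_norm,
    normSq_add_mul_I, EuclideanSpace.real_norm_sq_eq]
  calc x i ^ 2 + x j ^ 2 = ∑ k ∈ {i, j}, x k ^ 2 := (sum_pair (f := fun k => x k ^ 2) hij).symm
    _ ≤ ∑ k, x k ^ 2 := sum_le_sum_of_subset_of_nonneg (subset_univ _) fun k _ _ => sq_nonneg _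

theorem sum_coordPair_single_sq (hij : i ≠ j) :
    ∑ k, coordPair i j (EuclideanSpace.single k 1) ^ 2 = 0 := by
  rw [Fintype.sum_eq_add i j hij fun k hk => by simp [coordPair_apply, Ne.symm hk.1, Ne.symm hk.2]]
  simp [coordPair_apply, hij, hij.symm]

end

namespace Lacunary

def ratio (α : ℝ) : ℝ := 2 ^ (-α)

def term (α : ℝ) (j : ℕ) (z : ℂ) : ℂ := (ratio α ^ (j + 1) : ℝ) * z ^ 2 ^ (j + 1)

def series (α : ℝ) (z : ℂ) : ℂ := ∑' j, term α j z

variable {α : ℝ}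

theorem ratio_pos : 0 < ratio α := Real.rpow_pos_of_pos two_pos _

theorem ratio_lt_one (hα : 0 < α) : ratio α < 1 :=
  Real.rpow_lt_one_of_one_lt_of_neg one_lt_two (neg_neg_of_pos hα)

theorem one_lt_two_mul_ratio (hα : α < 1) : 1 < 2 * ratio α := by
  rw [ratio, ← Real.rpow_one_add' zero_le_two (by linarith)]
  exact Real.one_lt_rpow one_lt_two (by linarith)

theorem ratio_pow (α : ℝ) (k : ℕ) : ratio α ^ k = (1 / 2 ^ k : ℝ) ^ α := by
  rw [ratio, ← Real.rpow_natCast, ← Real.rpow_mul zero_le_two, one_div, ← Real.rpow_natCast,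
    ← Real.rpow_neg zero_le_two, ← Real.rpow_mul zero_le_two]
  ring_nf

theorem ratio_pow_eq_rpow (α : ℝ) (j : ℕ) :
    ratio α ^ (j + 1) = (2 : ℝ) ^ (-((j : ℝ) + 1) * α) := by
  rw [ratio, ← Real.rpow_natCast, ← Real.rpow_mul zero_le_two]
  push_cast
  ring_nf

theorem ratio_eq_mul_ratio (α β : ℝ) : ratio α = 2 ^ (β - α) * ratio β := by
  rw [ratio, ratio, ← Real.rpow_add two_pos]
  ring_nf

theorem summable_ratio_pow (hα : 0 < α) : Summable fun j : ℕ => ratio α ^ (j + 1) :=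
  (summable_nat_add_iff 1).mpr
    (summable_geometric_of_lt_one ratio_pos.le (ratio_lt_one hα))

theorem exists_mul_ratio_pow_lt_ratio_pow {β : ℝ} (hαβ : α < β) (K : ℝ) :
    ∃ m : ℕ, K * ratio β ^ (m + 1) < ratio α ^ (m + 1) := by
  have hgap : 1 < (2 : ℝ) ^ (β - α) := Real.one_lt_rpow one_lt_two (by linarith)
  obtain ⟨m, hm⟩ := pow_unbounded_of_one_lt K hgap
  refine ⟨m, ?_⟩
  rw [ratio_eq_mul_ratio α β, mul_pow]
  exact mul_lt_mul_of_pos_right (hm.trans_le (pow_le_pow_right₀ hgap.le m.le_succ))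
    (pow_pos ratio_pos _)

theorem tsum_ratio_pow_tail_le (hα : 0 < α) (N : ℕ) :
    ∑' j, ratio α ^ (j + N + 1) ≤ ratio α / (1 - ratio α) * ratio α ^ N := by
  rw [tsum_congr fun j => show ratio α ^ (j + N + 1) = ratio α ^ (N + 1) * ratio α ^ j by ring,
    tsum_mul_left, tsum_geometric_of_lt_one ratio_pos.le (ratio_lt_one hα)]
  apply le_of_eq
  field_simp
  ring

theorem summable_ratio_pow_mul_min (hα : 0 < α) {d : ℝ} (hd : 0 ≤ d) :
    Summable fun j : ℕ => ratio α ^ (j + 1) * min 2 (2 ^ (j + 1) * d) := by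
  refine ((summable_ratio_pow hα).mul_right 2).of_nonneg_of_le (fun j => ?_) fun j => ?_
  · have := ratio_pos (α := α)
    positivity
  · exact mul_le_mul_of_nonneg_left (min_le_left _ _) (pow_nonneg ratio_pos.le _)

theorem tsum_ratio_pow_mul_min_le (hα0 : 0 < α) (hα1 : α < 1) :
    ∃ C, 0 ≤ C ∧ ∀ d : ℝ, 0 ≤ d → d ≤ 2 →
      ∑' j, ratio α ^ (j + 1) * min 2 (2 ^ (j + 1) * d) ≤ C * d ^ α := by
  set q := ratio α
  set p := 2 * q
  have hq0 : 0 < q := ratio_pos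
  have hq1 : q < 1 := ratio_lt_one hα0
  have hp : 1 < p := one_lt_two_mul_ratio hα1
  have hp1 : 0 < p - 1 := sub_pos.mpr hp
  have hq1' : 0 < 1 - q := sub_pos.mpr hq1
  refine ⟨2 * (p / (p - 1)) + 2 * (q / (1 - q)), by positivity, fun d hd0 hd2 => ?_⟩
  rcases hd0.eq_or_lt with rfl | hd
  · simp [Real.zero_rpow hα0.ne']
  obtain ⟨N, hN, hN'⟩ := exists_nat_pow_near ((one_le_div hd).mpr hd2) one_lt_two
  have hscale : 2 ^ N * d ≤ 2 := (le_div_iff₀ hd).mp hN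
  have hqN : q ^ N ≤ d ^ α := by
    rw [ratio_pow]
    gcongr
    rw [div_le_iff₀ (by positivity)]
    rw [pow_succ, div_lt_iff₀ hd] at hN'
    linarith
  have hhead : ∑ j ∈ range N, q ^ (j + 1) * min 2 (2 ^ (j + 1) * d) ≤
      2 * (p / (p - 1)) * d ^ α :=
    calc ∑ j ∈ range N, q ^ (j + 1) * min 2 (2 ^ (j + 1) * d)
        ≤ ∑ j ∈ range N, p ^ (j + 1) * d := sum_le_sum fun j _ => by
          rw [mul_pow, mul_comm (2 ^ (j + 1)) (q ^ (j + 1)), mul_assoc]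
          gcongr
          exact min_le_right _ _
      _ = (∑ j ∈ range N, p ^ (j + 1)) * d := (sum_mul _ _ _).symm
      _ ≤ p / (p - 1) * p ^ N * d := by gcongr; exact sum_range_pow_succ_le hp N
      _ = p / (p - 1) * (2 ^ N * d) * q ^ N := by rw [mul_pow]; ring
      _ ≤ p / (p - 1) * 2 * d ^ α := by gcongr
      _ = 2 * (p / (p - 1)) * d ^ α := by ring
  have htail : ∑' j, q ^ (j + N + 1) * min 2 (2 ^ (j + N + 1) * d) ≤
      2 * (q / (1 - q)) * d ^ α :=
    calc ∑' j, q ^ (j + N + 1) * min 2 (2 ^ (j + N + 1) * d)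
        ≤ ∑' j, 2 * q ^ (j + N + 1) := by
          refine Summable.tsum_le_tsum (fun j => ?_)
            ((summable_nat_add_iff N).mpr (summable_ratio_pow_mul_min hα0 hd0))
            (((summable_nat_add_iff N).mpr (summable_ratio_pow hα0)).mul_left 2)
          rw [mul_comm 2]
          gcongr
          exact min_le_left _ _
      _ = 2 * ∑' j, q ^ (j + N + 1) := tsum_mul_left
      _ ≤ 2 * (q / (1 - q) * q ^ N) := by gcongr; exact tsum_ratio_pow_tail_le hα0 N
      _ ≤ 2 * (q / (1 - q)) * d ^ α := by rw [← mul_assoc]; gcongr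
  rw [← (summable_ratio_pow_mul_min hα0 hd0).sum_add_tsum_nat_add N]
  linarith

theorem norm_term_le (j : ℕ) {z : ℂ} (hz : ‖z‖ ≤ 1) : ‖term α j z‖ ≤ ratio α ^ (j + 1) := by
  rw [term, norm_mul, norm_real, Real.norm_of_nonneg (pow_nonneg ratio_pos.le _), norm_pow]
  exact mul_le_of_le_one_right (pow_nonneg ratio_pos.le _) (pow_le_one₀ (norm_nonneg z) hz)

theorem summable_term (hα : 0 < α) {z : ℂ} (hz : ‖z‖ ≤ 1) : Summable fun j => term α j z :=
  (summable_ratio_pow hα).of_norm_bounded fun j => norm_term_le j hz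

theorem differentiableOn_series (hα : 0 < α) : DifferentiableOn ℂ (series α) (ball 0 1) :=
  differentiableOn_tsum_of_summable_norm (summable_ratio_pow hα)
    (fun _ => ((differentiable_pow _).const_mul _).differentiableOn) isOpen_ball
    fun j _ hz => norm_term_le j (mem_ball_zero_iff.mp hz).le

theorem norm_term_sub_le (j : ℕ) {z w : ℂ} (hz : ‖z‖ ≤ 1) (hw : ‖w‖ ≤ 1) :
    ‖term α j z - term α j w‖ ≤ ratio α ^ (j + 1) * min 2 (2 ^ (j + 1) * ‖z - w‖) := by
  rw [term, term, ← mul_sub, norm_mul, norm_real,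
    Real.norm_of_nonneg (pow_nonneg ratio_pos.le _)]
  refine mul_le_mul_of_nonneg_left (le_min ?_ ?_) (pow_nonneg ratio_pos.le _)
  · calc ‖z ^ 2 ^ (j + 1) - w ^ 2 ^ (j + 1)‖
        ≤ ‖z‖ ^ 2 ^ (j + 1) + ‖w‖ ^ 2 ^ (j + 1) := by
          rw [← norm_pow, ← norm_pow]; exact norm_sub_le _ _
      _ ≤ 1 + 1 := add_le_add (pow_le_one₀ (norm_nonneg z) hz) (pow_le_one₀ (norm_nonneg w) hw)
      _ = 2 := one_add_one_eq_two
  · exact_mod_cast norm_pow_sub_pow_le hz hw _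

theorem exists_norm_series_sub_le (hα0 : 0 < α) (hα1 : α < 1) :
    ∃ C, 0 ≤ C ∧ ∀ z w : ℂ, ‖z‖ ≤ 1 → ‖w‖ ≤ 1 →
      ‖series α z - series α w‖ ≤ C * ‖z - w‖ ^ α := by
  obtain ⟨C, hC0, hC⟩ := tsum_ratio_pow_mul_min_le hα0 hα1
  refine ⟨C, hC0, fun z w hz hw => ?_⟩
  calc ‖series α z - series α w‖ = ‖∑' j, (term α j z - term α j w)‖ := by
        rw [series, series, (summable_term hα0 hz).tsum_sub (summable_term hα0 hw)]
    _ ≤ ∑' j, ratio α ^ (j + 1) * min 2 (2 ^ (j + 1) * ‖z - w‖) :=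
        tsum_of_norm_bounded (summable_ratio_pow_mul_min hα0 (norm_nonneg _)).hasSum
          fun j => norm_term_sub_le j hz hw
    _ ≤ C * ‖z - w‖ ^ α := hC _ (norm_nonneg _) ((norm_sub_le z w).trans (by linarith))

theorem re_term_one_sub_term (j : ℕ) (r : ℝ) :
    (term α j 1 - term α j r).re = ratio α ^ (j + 1) * (1 - r ^ 2 ^ (j + 1)) := by
  simp only [term, one_pow, mul_one, ← ofReal_pow, ← ofReal_mul, ← ofReal_sub, ofReal_re]
  ring

theorem ratio_pow_mul_le_re_series_one_sub (hα : 0 < α) {r : ℝ} (hr0 : 0 ≤ r) (hr1 : r ≤ 1)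
    (m : ℕ) : ratio α ^ (m + 1) * (1 - r ^ 2 ^ (m + 1)) ≤ (series α 1 - series α r).re := by
  have hnonneg (j : ℕ) : 0 ≤ ratio α ^ (j + 1) * (1 - r ^ 2 ^ (j + 1)) :=
    mul_nonneg (pow_nonneg ratio_pos.le _) (sub_nonneg.mpr (pow_le_one₀ hr0 hr1))
  have hr : ‖(r : ℂ)‖ ≤ 1 := by rwa [norm_real, Real.norm_of_nonneg hr0]
  have hsum : (series α 1 - series α r).re = ∑' j, ratio α ^ (j + 1) * (1 - r ^ 2 ^ (j + 1)) := by
    rw [series, series, ← (summable_term hα (by simp)).tsum_sub (summable_term hα hr),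
      re_tsum ((summable_term hα (by simp)).sub (summable_term hα hr))]
    exact tsum_congr fun j => re_term_one_sub_term j r
  rw [hsum]
  refine Summable.le_tsum ((summable_ratio_pow hα).of_nonneg_of_le hnonneg fun j => ?_) m
    fun j _ => hnonneg j
  exact mul_le_of_le_one_right (pow_nonneg ratio_pos.le _)
    (sub_le_self _ (pow_nonneg hr0 _))

theorem not_exists_re_series_one_sub_le (hα : 0 < α) {β : ℝ} (hαβ : α < β) :
    ¬ ∃ C, ∀ r : ℝ, 0 ≤ r → r ≤ 1 → (series α 1 - series α r).re ≤ C * (1 - r) ^ β := by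
  rintro ⟨C, hC⟩
  obtain ⟨m, hm⟩ := exists_mul_ratio_pow_lt_ratio_pow hαβ (2 * C)
  -- at `r = 1 - 2⁻⁽ᵐ⁺¹⁾` the `m`-th term alone loses half of its coefficient
  have hk : 1 ≤ 2 ^ (m + 1) := Nat.one_le_two_pow
  set r : ℝ := 1 - 1 / (2 ^ (m + 1) : ℕ)
  have hr0 : 0 ≤ r := sub_nonneg.mpr (div_le_one_of_le₀ (by exact_mod_cast hk) (by positivity))
  have hr1 : r ≤ 1 := sub_le_self _ (by positivity)
  have hlow := ratio_pow_mul_le_re_series_one_sub hα hr0 hr1 m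
  have hhalf : r ^ 2 ^ (m + 1) ≤ 1 / 2 := one_sub_one_div_pow_le_half hk
  have hup := hC r hr0 hr1
  rw [show 1 - r = 1 / 2 ^ (m + 1) by simp [r], ← ratio_pow] at hup
  nlinarith [pow_pos (ratio_pos (α := α)) (m + 1)]

end Lacunary

open Lacunary in
/-- **The function `u x = ∑_{j≥1} 2^{-jα} Re (x₁ + i x₂) ^ (2^j)` is harmonic in the unit
ball, `α`-Hölder on the closed unit ball, but not `β`-Hölder for any `β > α`.** -/
theorem weierstrass_type_harmonic_exactly_alpha_holder (n : ℕ) (hn : 2 ≤ n)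
    (α : ℝ) (hα0 : 0 < α) (hα1 : α < 1)
    (u : EuclideanSpace ℝ (Fin n) → ℝ)
    (hu : ∀ x, u x = ∑' j : ℕ, (2 : ℝ) ^ (-((j : ℝ) + 1) * α) *
        ((((x ⟨0, by omega⟩ : ℝ) : ℂ) + (x ⟨1, by omega⟩ : ℝ) * Complex.I) ^ (2 ^ (j + 1)) |>.re)) :
    IsHarmonicOn u (ball 0 1) ∧
    (∃ C : ℝ, ∀ x ∈ closedBall (0 : EuclideanSpace ℝ (Fin n)) 1,
        ∀ y ∈ closedBall (0 : EuclideanSpace ℝ (Fin n)) 1,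
          |u x - u y| ≤ C * ‖x - y‖ ^ α) ∧
    (∀ β : ℝ, α < β →
      ¬ ∃ C : ℝ, ∀ x ∈ closedBall (0 : EuclideanSpace ℝ (Fin n)) 1,
          ∀ y ∈ closedBall (0 : EuclideanSpace ℝ (Fin n)) 1,
            |u x - u y| ≤ C * ‖x - y‖ ^ β) := by
  have hij : (⟨0, by omega⟩ : Fin n) ≠ ⟨1, by omega⟩ := by simp
  set L := coordPair (⟨0, by omega⟩ : Fin n) ⟨1, by omega⟩
  have hL {x : EuclideanSpace ℝ (Fin n)} (hx : x ∈ closedBall 0 1) : ‖L x‖ ≤ 1 :=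
    (norm_coordPair_le hij x).trans (mem_closedBall_zero_iff.mp hx)
  have hu_eq : Set.EqOn u (fun x => (series α (L x)).re) (closedBall 0 1) := fun x hx => by
    show u x = (series α (L x)).re
    rw [hu, series, re_tsum (summable_term hα0 (hL hx))]
    exact tsum_congr fun j => by rw [term, re_ofReal_mul, ratio_pow_eq_rpow, coordPair_apply]
  refine ⟨?_, ?_, fun β hβ ⟨C, hC⟩ => ?_⟩
  · refine (isHarmonicOn_re_comp_clm L (sum_coordPair_single_sq hij) isOpen_ball
      (differentiableOn_series hα0) fun x hx => ?_).congr isOpen_ball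
      (hu_eq.mono ball_subset_closedBall)
    rw [mem_ball_zero_iff] at hx ⊢
    exact (norm_coordPair_le hij x).trans_lt hx
  · obtain ⟨C, hC0, hC⟩ := exists_norm_series_sub_le hα0 hα1
    refine ⟨C, fun x hx y hy => ?_⟩
    rw [hu_eq hx, hu_eq hy, ← sub_re]
    calc |(series α (L x) - series α (L y)).re| ≤ ‖series α (L x) - series α (L y)‖ :=
          abs_re_le_norm _
      _ ≤ C * ‖L x - L y‖ ^ α := hC _ _ (hL hx) (hL hy)
      _ ≤ C * ‖x - y‖ ^ α := by rw [← map_sub]; gcongr; exact norm_coordPair_le hij _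
  · refine not_exists_re_series_one_sub_le hα0 hβ ⟨C, fun r hr0 hr1 => ?_⟩
    have hmem {t : ℝ} (ht0 : 0 ≤ t) (ht1 : t ≤ 1) :
        EuclideanSpace.single (⟨0, by omega⟩ : Fin n) t ∈ closedBall 0 1 := by
      simpa [PiLp.norm_single, abs_of_nonneg ht0] using ht1
    have h := hC _ (hmem zero_le_one le_rfl) _ (hmem hr0 hr1)
    rw [hu_eq (hmem zero_le_one le_rfl), hu_eq (hmem hr0 hr1), ← PiLp.single_sub,
      PiLp.norm_single, Real.norm_of_nonneg (sub_nonneg.mpr hr1)] at h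
    simpa only [L, coordPair_single_left hij, ofReal_one, sub_re] using (le_abs_self _).trans h
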